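/- arXiv:1803.00170 — 3 statements merged into one kernel-verified Lean document; each statement's English description precedes it below -/
import Mathlib

section
/- Under the attacked stationary filter model, the second moment of the filter state satisfies E[x̂_k²] = K² σ_z² (1 + ρ𝒜) / ((1 − ρ𝒜)(1 − 𝒜²)) + B²(1 − C K)² σ_e² / (1 − 𝒜²). -/
open MeasureTheory ProbabilityTheory
open scoped ENNReal NNReal

/-!
Write `x̂_k = ∑ᵢ fᵢ` with `fᵢ = 𝒜ⁱ (K z_{k-i} + c e_{k-1-i})` and `c = B (1 - C K)`. The `L²` norms
of the `fᵢ` decay like `|𝒜|ⁱ`, so the series converges absolutely almost everywhere and, by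
dominated convergence, `E[x̂_k²] = ∑_{i,j} E[fᵢ fⱼ]`. Since `z` and `e` are orthogonal and `e` is
white, `E[fᵢ fⱼ] = 𝒜^{i+j} (K² σ_z² ρ^{|i-j|} + c² σ_e² δᵢⱼ)`. The resulting double geometric series
is summed by splitting `ℕ²` into the weak upper and the strict lower triangle.
-/

def sumTrianglesEquiv : ℕ × ℕ ⊕ ℕ × ℕ ≃ ℕ × ℕ where
  toFun := Sum.elim (fun q => (q.1, q.1 + q.2)) (fun q => (q.1 + q.2 + 1, q.1))
  invFun p := if p.1 ≤ p.2 then .inl (p.1, p.2 - p.1) else .inr (p.2, p.1 - p.2 - 1)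
  left_inv := by
    rintro (⟨m, d⟩ | ⟨m, d⟩) <;> simp
    omega
  right_inv := by
    rintro ⟨i, j⟩
    by_cases h : i ≤ j <;> simp [h]
    omega

theorem hasSum_pow_mul_pow {a b : ℝ} (ha : |a| < 1) (hb : |b| < 1) :
    HasSum (fun p : ℕ × ℕ => a ^ p.1 * b ^ p.2) ((1 - a)⁻¹ * (1 - b)⁻¹) :=
  (hasSum_geometric_of_abs_lt_one ha).mul (hasSum_geometric_of_abs_lt_one hb)
    (summable_mul_of_summable_norm (by simpa using summable_geometric_of_lt_one (abs_nonneg a) ha)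
      (by simpa using summable_geometric_of_lt_one (abs_nonneg b) hb))

theorem hasSum_pow_mul_pow_mul_pow_natAbs_sub {a r : ℝ} (ha : |a| < 1) (hr : |r| < 1) :
    HasSum (fun p : ℕ × ℕ => a ^ p.1 * a ^ p.2 * r ^ ((p.1 : ℤ) - p.2).natAbs)
      ((1 + r * a) / ((1 - r * a) * (1 - a ^ 2))) := by
  have ha2 : |a ^ 2| < 1 := by rwa [abs_sq, sq_lt_one_iff_abs_lt_one]
  have har : |a * r| < 1 := by
    rw [abs_mul]; exact mul_lt_one_of_nonneg_of_lt_one_left (abs_nonneg a) ha hr.le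
  have hgeom := hasSum_pow_mul_pow ha2 har
  have hsplit : HasSum (Sum.elim (fun q : ℕ × ℕ => (a ^ 2) ^ q.1 * (a * r) ^ q.2)
      (fun q : ℕ × ℕ => (a ^ 2) ^ q.1 * (a * r) ^ q.2 * (a * r)))
      ((1 - a ^ 2)⁻¹ * (1 - a * r)⁻¹ + (1 - a ^ 2)⁻¹ * (1 - a * r)⁻¹ * (a * r)) :=
    hgeom.sum (hgeom.mul_right (a * r))
  have hval : (1 + r * a) / ((1 - r * a) * (1 - a ^ 2)) =
      (1 - a ^ 2)⁻¹ * (1 - a * r)⁻¹ + (1 - a ^ 2)⁻¹ * (1 - a * r)⁻¹ * (a * r) := by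
    have h1 : 1 - a ^ 2 ≠ 0 := by rw [abs_lt] at ha2; linarith
    have h2 : 1 - r * a ≠ 0 := by rw [abs_lt] at har; linarith
    rw [mul_comm a r]
    field_simp
  rw [← sumTrianglesEquiv.hasSum_iff, hval]
  refine hsplit.congr_fun ?_
  rintro (⟨m, d⟩ | ⟨m, d⟩)
  · simp only [sumTrianglesEquiv, Equiv.coe_fn_mk, Function.comp_apply, Sum.elim_inl]
    rw [show ((m : ℤ) - (m + d : ℕ)).natAbs = d by omega]
    ring
  · simp only [sumTrianglesEquiv, Equiv.coe_fn_mk, Function.comp_apply, Sum.elim_inr]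
    rw [show ((m + d + 1 : ℕ) - (m : ℤ)).natAbs = d + 1 by omega]
    ring

theorem hasSum_ite_eq_pow_mul_pow {a : ℝ} (ha : |a| < 1) :
    HasSum (fun p : ℕ × ℕ => if p.1 = p.2 then a ^ p.1 * a ^ p.2 else 0) (1 - a ^ 2)⁻¹ := by
  have hdiag : Function.Injective (fun i : ℕ => (i, i)) := fun i j h => congrArg Prod.fst h
  rw [← hdiag.hasSum_iff]
  · refine (hasSum_geometric_of_lt_one (sq_nonneg a)
      ((sq_lt_one_iff_abs_lt_one a).2 ha)).congr_fun fun i => ?_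
    simp only [Function.comp_apply, if_true]
    ring
  · rintro ⟨i, j⟩ hoff
    refine if_neg fun hij => hoff ⟨i, ?_⟩
    simp_all

section

variable {Ω : Type*} [MeasurableSpace Ω] {μ : Measure Ω}

theorem lintegral_enorm_mul_le_eLpNorm_two_mul {f g : Ω → ℝ} (hf : AEStronglyMeasurable f μ)
    (hg : AEStronglyMeasurable g μ) :
    ∫⁻ ω, ‖f ω * g ω‖ₑ ∂μ ≤ eLpNorm f 2 μ * eLpNorm g 2 μ := by
  rw [← eLpNorm_one_eq_lintegral_enorm]
  simpa using eLpNorm_le_eLpNorm_mul_eLpNorm_of_nnnorm (p := 2) (q := 2) (r := 1) hf hg (· * ·) 1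
    (.of_forall fun ω => by simp)

theorem integral_tsum_sq_eq_tsum_integral_mul {ι : Type*} [Countable ι] {f : ι → Ω → ℝ}
    (hf : ∀ i, AEStronglyMeasurable (f i) μ) (hsum : ∑' i, eLpNorm (f i) 2 μ ≠ ∞) :
    ∫ ω, (∑' i, f i ω) ^ 2 ∂μ = ∑' p : ι × ι, ∫ ω, f p.1 ω * f p.2 ω ∂μ := by
  have hsq : ∀ᵐ ω ∂μ, (∑' i, f i ω) ^ 2 = ∑' p : ι × ι, f p.1 ω * f p.2 ω := by
    filter_upwards [summable_norm_of_tsum_eLpNorm_ne_top one_le_two hf hsum] with ω hω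
    rw [sq, tsum_mul_tsum_of_summable_norm hω hω]
  rw [integral_congr_ae hsq]
  refine integral_tsum (fun p => (hf p.1).mul (hf p.2)) (ne_top_of_le_ne_top ?_
    (ENNReal.tsum_le_tsum fun p => lintegral_enorm_mul_le_eLpNorm_two_mul (hf p.1) (hf p.2)))
  rw [ENNReal.tsum_prod']
  simp_rw [ENNReal.tsum_mul_left, ENNReal.tsum_mul_right]
  exact ENNReal.mul_ne_top hsum hsum

theorem MeasureTheory.MemLp.eLpNorm_two_eq_ofReal_sqrt {f : Ω → ℝ} (hf : MemLp f 2 μ) :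
    eLpNorm f 2 μ = ENNReal.ofReal √(∫ ω, f ω ^ 2 ∂μ) := by
  rw [hf.eLpNorm_eq_integral_rpow_norm two_ne_zero ENNReal.ofNat_ne_top, Real.sqrt_eq_rpow]
  simp

theorem tsum_eLpNorm_two_ne_top {ι : Type*} {f : ι → Ω → ℝ} (hf : ∀ i, MemLp (f i) 2 μ)
    (h : Summable fun i => √(∫ ω, f i ω ^ 2 ∂μ)) : ∑' i, eLpNorm (f i) 2 μ ≠ ∞ := by
  simp_rw [fun i => (hf i).eLpNorm_two_eq_ofReal_sqrt]
  rw [← ENNReal.ofReal_tsum_of_nonneg (fun i => Real.sqrt_nonneg _) h]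
  exact ENNReal.ofReal_ne_top

theorem integral_add_mul_add_of_integral_mul_eq_zero {X X' Y Y' : Ω → ℝ} (hX : MemLp X 2 μ)
    (hX' : MemLp X' 2 μ) (hY : MemLp Y 2 μ) (hY' : MemLp Y' 2 μ)
    (hXY' : ∫ ω, X ω * Y' ω ∂μ = 0) (hYX' : ∫ ω, Y ω * X' ω ∂μ = 0) (a b : ℝ) :
    ∫ ω, (a * X ω + b * Y ω) * (a * X' ω + b * Y' ω) ∂μ =
      a ^ 2 * ∫ ω, X ω * X' ω ∂μ + b ^ 2 * ∫ ω, Y ω * Y' ω ∂μ := by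
  have hXX' : Integrable (fun ω => a ^ 2 * (X ω * X' ω)) μ := (hX.integrable_mul hX').const_mul _
  have hXY : Integrable (fun ω => a * b * (X ω * Y' ω)) μ := (hX.integrable_mul hY').const_mul _
  have hYX : Integrable (fun ω => b * a * (Y ω * X' ω)) μ := (hY.integrable_mul hX').const_mul _
  have hYY' : Integrable (fun ω => b ^ 2 * (Y ω * Y' ω)) μ := (hY.integrable_mul hY').const_mul _
  calc ∫ ω, (a * X ω + b * Y ω) * (a * X' ω + b * Y' ω) ∂μ
      = ∫ ω, a ^ 2 * (X ω * X' ω) + a * b * (X ω * Y' ω) + b * a * (Y ω * X' ω)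
          + b ^ 2 * (Y ω * Y' ω) ∂μ := by congr 1; ext ω; ring
    _ = _ := by
      rw [integral_add ((hXX'.fun_add hXY).fun_add hYX) hYY', integral_add (hXX'.fun_add hXY) hYX,
        integral_add hXX' hXY]
      simp only [integral_const_mul, hXY', hYX', mul_zero, add_zero]

theorem integral_mul_eq_pow_natAbs_sub_mul {z : ℤ → Ω → ℝ} {ρ s : ℝ}
    (hcov : ∀ (k : ℤ) (j : ℕ), ∫ ω, z k ω * z (k - j) ω ∂μ = ρ ^ j * s) (a b : ℤ) :
    ∫ ω, z a ω * z b ω ∂μ = ρ ^ (a - b).natAbs * s := by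
  rcases le_total b a with h | h
  · have := hcov a (a - b).natAbs
    rwa [show a - ((a - b).natAbs : ℤ) = b by omega] at this
  · have := hcov b (a - b).natAbs
    rw [show b - ((a - b).natAbs : ℤ) = a by omega] at this
    simpa only [mul_comm (z a _)] using this

theorem integral_sq_gaussianReal_zero (v : ℝ≥0) : ∫ x, x ^ 2 ∂gaussianReal 0 v = v := by
  rw [← variance_fun_id_gaussianReal (μ := 0) (v := v),
    variance_eq_integral measurable_id'.aemeasurable]
  simp

theorem integral_mul_eq_ite_of_iIndepFun {ι : Type*} [DecidableEq ι] {e : ι → Ω → ℝ} {v : ℝ≥0}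
    (hlaw : ∀ a, HasLaw (e a) (gaussianReal 0 v) μ) (hind : iIndepFun e μ) (a b : ι) :
    ∫ ω, e a ω * e b ω ∂μ = if a = b then (v : ℝ) else 0 := by
  split_ifs with hab
  · subst hab
    simpa [sq] using ((hlaw a).integral_comp (f := fun x => x ^ 2) (by fun_prop)).trans
      (integral_sq_gaussianReal_zero v)
  · rw [(hind.indepFun hab).integral_fun_mul_eq_mul_integral
      (hlaw a).aemeasurable.aestronglyMeasurable (hlaw b).aemeasurable.aestronglyMeasurable,
      (hlaw a).integral_eq]
    simp

noncomputable def filterStateTerm (𝒜 K c : ℝ) (z e : ℤ → Ω → ℝ) (k : ℤ) (i : ℕ) (ω : Ω) : ℝ :=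
  𝒜 ^ i * (K * z (k - i) ω + c * e (k - 1 - i) ω)

section filterStateTerm

variable {z e : ℤ → Ω → ℝ} {ρ s t : ℝ} (𝒜 K c : ℝ) (k : ℤ)

theorem integral_filterStateTerm_mul (hz : ∀ a, MemLp (z a) 2 μ) (he : ∀ a, MemLp (e a) 2 μ)
    (hzz : ∀ a b, ∫ ω, z a ω * z b ω ∂μ = ρ ^ (a - b).natAbs * s)
    (hee : ∀ a b, ∫ ω, e a ω * e b ω ∂μ = if a = b then t else 0)
    (hze : ∀ a b, ∫ ω, z a ω * e b ω ∂μ = 0) (i j : ℕ) :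
    ∫ ω, filterStateTerm 𝒜 K c z e k i ω * filterStateTerm 𝒜 K c z e k j ω ∂μ =
      K ^ 2 * s * (𝒜 ^ i * 𝒜 ^ j * ρ ^ ((i : ℤ) - j).natAbs) +
        c ^ 2 * t * (if i = j then 𝒜 ^ i * 𝒜 ^ j else 0) := by
  simp_rw [filterStateTerm, mul_mul_mul_comm (𝒜 ^ i)]
  rw [integral_const_mul, integral_add_mul_add_of_integral_mul_eq_zero (hz _) (hz _) (he _) (he _)
    (hze _ _) (by simpa only [mul_comm] using hze _ _), hzz, hee,
    show (k - i - (k - j)).natAbs = ((i : ℤ) - j).natAbs by omega]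
  by_cases hij : i = j
  · simp only [hij, sub_self, Int.natAbs_zero, pow_zero, one_mul, ↓reduceIte, mul_one]; ring
  · rw [if_neg (by omega), if_neg hij]; ring

theorem integral_tsum_filterStateTerm_sq (h𝒜 : |𝒜| < 1) (hρ : |ρ| < 1)
    (hz : ∀ a, MemLp (z a) 2 μ) (he : ∀ a, MemLp (e a) 2 μ)
    (hzz : ∀ a b, ∫ ω, z a ω * z b ω ∂μ = ρ ^ (a - b).natAbs * s)
    (hee : ∀ a b, ∫ ω, e a ω * e b ω ∂μ = if a = b then t else 0)
    (hze : ∀ a b, ∫ ω, z a ω * e b ω ∂μ = 0) :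
    ∫ ω, (∑' i, filterStateTerm 𝒜 K c z e k i ω) ^ 2 ∂μ =
      K ^ 2 * s * ((1 + ρ * 𝒜) / ((1 - ρ * 𝒜) * (1 - 𝒜 ^ 2))) + c ^ 2 * t * (1 - 𝒜 ^ 2)⁻¹ := by
  have hcov := integral_filterStateTerm_mul 𝒜 K c k hz he hzz hee hze
  set f := filterStateTerm 𝒜 K c z e k
  have hfL2 (i : ℕ) : MemLp (f i) 2 μ :=
    (((hz _).const_mul K).add ((he _).const_mul c)).const_mul _
  have hfnorm : Summable fun i => √(∫ ω, f i ω ^ 2 ∂μ) := by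
    have hsqrt (i : ℕ) : √(∫ ω, f i ω ^ 2 ∂μ) = √(K ^ 2 * s + c ^ 2 * t) * |𝒜| ^ i := by
      have h := hcov i i
      simp only [if_true, sub_self, Int.natAbs_zero, pow_zero, mul_one, ← sq] at h
      rw [h, ← add_mul, Real.sqrt_mul' _ (sq_nonneg _), Real.sqrt_sq_eq_abs, abs_pow]
    simp_rw [hsqrt]
    exact (summable_geometric_of_lt_one (abs_nonneg 𝒜) h𝒜).mul_left _
  rw [integral_tsum_sq_eq_tsum_integral_mul (fun i => (hfL2 i).1)
      (tsum_eLpNorm_two_ne_top hfL2 hfnorm),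
    tsum_congr fun p : ℕ × ℕ => hcov p.1 p.2]
  exact (((hasSum_pow_mul_pow_mul_pow_natAbs_sub h𝒜 hρ).mul_left _).add
    ((hasSum_ite_eq_pow_mul_pow h𝒜).mul_left _)).tsum_eq

end filterStateTerm

end

theorem attacked_xhat_second_moment_general
    {Ω : Type*} [MeasurableSpace Ω] (μ : Measure Ω)
    (z e : ℤ → Ω → ℝ) (B C K ρ σz σe : ℝ)
    (hρ : |ρ| < 1)
    (𝒜 : ℝ) (h𝒜 : |𝒜| < 1)
    -- `z` is a centered stationary Gaussian process with
    -- `E[z_k z_{k−j}] = ρ^{|j|} σ_z²` for all `j ≥ 0`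
    (hzL2 : ∀ k, MemLp (z k) 2 μ)
    (hzcov : ∀ (k : ℤ) (j : ℕ), ∫ ω, z k ω * z (k - (j : ℤ)) ω ∂μ = ρ ^ j * σz ^ 2)
    -- `e` is an i.i.d. `N(0, σ_e²)` sequence, independent of the process `z`
    (helaw : ∀ k, Measure.map (e k) μ = gaussianReal 0 (σe ^ 2).toNNReal)
    (heindep : iIndepFun e μ)
    (hze : IndepFun (fun ω => fun i => z i ω) (fun ω => fun i => e i ω) μ)
    -- the stationary attacked filter state, defined by the L²-convergent series
    (xhat : ℤ → Ω → ℝ)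
    (hxhat : ∀ (k : ℤ) (ω : Ω), xhat k ω =
      ∑' i : ℕ, 𝒜 ^ i * (K * z (k - (i : ℤ)) ω + B * (1 - C * K) * e (k - 1 - (i : ℤ)) ω)) :
    ∀ k : ℤ, ∫ ω, (xhat k ω) ^ 2 ∂μ =
      K ^ 2 * σz ^ 2 * (1 + ρ * 𝒜) / ((1 - ρ * 𝒜) * (1 - 𝒜 ^ 2)) +
        B ^ 2 * (1 - C * K) ^ 2 * σe ^ 2 / (1 - 𝒜 ^ 2) := by
  intro k
  have hlaw (a : ℤ) : HasLaw (e a) (gaussianReal 0 (σe ^ 2).toNNReal) μ :=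
    ⟨aemeasurable_of_map_neZero (by rw [helaw a]; infer_instance), helaw a⟩
  have heL2 (a : ℤ) : MemLp (e a) 2 μ := (hlaw a).hasGaussianLaw.memLp_two
  have hee (a b : ℤ) : ∫ ω, e a ω * e b ω ∂μ = if a = b then σe ^ 2 else 0 := by
    rw [integral_mul_eq_ite_of_iIndepFun hlaw heindep, Real.coe_toNNReal _ (sq_nonneg σe)]
  have hze0 (a b : ℤ) : ∫ ω, z a ω * e b ω ∂μ = 0 := by
    have hab : IndepFun (z a) (e b) μ := hze.comp (measurable_pi_apply a) (measurable_pi_apply b)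
    rw [hab.integral_fun_mul_eq_mul_integral (hzL2 a).1 (heL2 b).1, (hlaw b).integral_eq]
    simp
  rw [show xhat k = fun ω => ∑' i, filterStateTerm 𝒜 K (B * (1 - C * K)) z e k i ω from
      funext (hxhat k),
    integral_tsum_filterStateTerm_sq 𝒜 K _ k h𝒜 hρ hzL2 heL2
      (integral_mul_eq_pow_natAbs_sub_mul hzcov) hee hze0]
  ring

/-- Under the attacked stationary filter model, the second moment of the filter
state satisfies
`E[x̂_k²] = K² σ_z² (1 + ρ𝒜) / ((1 − ρ𝒜)(1 − 𝒜²)) + B²(1 − C K)² σ_e² / (1 − 𝒜²)`. -/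
theorem attacked_xhat_second_moment
    {Ω : Type*} [MeasurableSpace Ω] (μ : Measure Ω) [IsProbabilityMeasure μ]
    (z e : ℤ → Ω → ℝ) (A B C K L ρ σz σe : ℝ)
    (hρ : |ρ| < 1)
    (𝒜 : ℝ) (h𝒜def : 𝒜 = (1 - C * K) * (A + B * L)) (h𝒜 : |𝒜| < 1)
    -- `z` is a centered stationary Gaussian process with
    -- `E[z_k z_{k−j}] = ρ^{|j|} σ_z²` for all `j ≥ 0`
    (hzgauss : ∀ (s : Finset ℤ) (c : ℤ → ℝ), ∃ v : NNReal,
      Measure.map (fun ω => ∑ i ∈ s, c i * z i ω) μ = gaussianReal 0 v)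
    (hzL2 : ∀ k, MemLp (z k) 2 μ)
    (hzcov : ∀ (k : ℤ) (j : ℕ), ∫ ω, z k ω * z (k - (j : ℤ)) ω ∂μ = ρ ^ j * σz ^ 2)
    -- `e` is an i.i.d. `N(0, σ_e²)` sequence, independent of the process `z`
    (helaw : ∀ k, Measure.map (e k) μ = gaussianReal 0 (σe ^ 2).toNNReal)
    (heindep : iIndepFun e μ)
    (hze : IndepFun (fun ω => fun i => z i ω) (fun ω => fun i => e i ω) μ)
    -- the stationary attacked filter state, defined by the L²-convergent series
    (xhat : ℤ → Ω → ℝ)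
    (hxhat : ∀ (k : ℤ) (ω : Ω), xhat k ω =
      ∑' i : ℕ, 𝒜 ^ i * (K * z (k - (i : ℤ)) ω + B * (1 - C * K) * e (k - 1 - (i : ℤ)) ω)) :
    ∀ k : ℤ, ∫ ω, (xhat k ω) ^ 2 ∂μ =
      K ^ 2 * σz ^ 2 * (1 + ρ * 𝒜) / ((1 - ρ * 𝒜) * (1 - 𝒜 ^ 2)) +
        B ^ 2 * (1 - C * K) ^ 2 * σe ^ 2 / (1 - 𝒜 ^ 2) :=
  attacked_xhat_second_moment_general μ z e B C K ρ σz σe hρ 𝒜 h𝒜 hzL2 hzcov helaw heindep hze xhat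
    hxhat
end

section
/- Let μ₁ be the centered bivariate Gaussian measure on ℝ² with covariance matrix [[σ̃², λ σ̃ σ_e], [λ σ̃ σ_e, σ_e²]] and let μ₀ = N(0, σ_γ²) ⊗ N(0, σ_e²) be the product of two centered real Gaussian measures. Then the Kullback–Leibler divergence satisfies D(μ₁ ‖ μ₀) = (1/2) log(1/(1 − λ²)) + (1/2)( σ̃²/σ_γ² − 1 − log(σ̃²/σ_γ²) ). -/
open MeasureTheory ProbabilityTheory

/-- The Kullback–Leibler divergence `D(μ ‖ ν) = ∫ log(dμ/dν) dμ`. -/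
noncomputable def klDivR {α : Type*} [MeasurableSpace α] (μ ν : Measure α) : ℝ :=
  ∫ x, Real.log (μ.rnDeriv ν x).toReal ∂μ

/-- The centered bivariate Gaussian measure on `ℝ²` with covariance matrix
`[[s1², l·s1·s2], [l·s1·s2, s2²]]` (standard deviations `s1, s2 > 0`,
correlation coefficient `l`), given by its density with respect to the
Lebesgue measure on `ℝ²`. -/
noncomputable def bivGaussian (s1 s2 l : ℝ) : Measure (ℝ × ℝ) :=
  (volume : Measure (ℝ × ℝ)).withDensity fun p =>
    ENNReal.ofReal ((2 * Real.pi * s1 * s2 * Real.sqrt (1 - l ^ 2))⁻¹ *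
      Real.exp (-(2 * (1 - l ^ 2))⁻¹ *
        ((p.1 / s1) ^ 2 - 2 * l * (p.1 / s1) * (p.2 / s2) + (p.2 / s2) ^ 2)))

/-!
The density of `bivGaussian s1 s2 l` factors as `N(0, s1²)(x) · N(c x, s2² (1 - l²))(y)` with
`c = l s2 / s1`, so the measure is the composition-product of `N(0, s1²)` with a Gaussian kernel
whose mean is linear in `x`. Against a product of centred Gaussians the log-likelihood ratio is a
quadratic polynomial in `(x, y)`, so the divergence only involves the second moments `E x² = s1²`,
`E xy = l s1 s2`, `E y² = s2²`, which the kernel reduces to one-dimensional Gaussian moments.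
-/

open Real
open scoped ENNReal NNReal

namespace ProbabilityTheory

lemma integrable_sq_gaussianReal (m : ℝ) (v : ℝ≥0) :
    Integrable (fun x => x ^ 2) (gaussianReal m v) :=
  (memLp_id_gaussianReal 2).integrable_sq

lemma integral_sq_gaussianReal (m : ℝ) (v : ℝ≥0) :
    ∫ x, x ^ 2 ∂gaussianReal m v = v + m ^ 2 := by
  have h := variance_eq_sub (memLp_id_gaussianReal (μ := m) (v := v) 2)
  simp only [variance_id_gaussianReal, Pi.pow_apply, id, integral_id_gaussianReal] at h
  linarith

lemma log_gaussianPDFReal (m : ℝ) {v : ℝ≥0} (hv : v ≠ 0) (x : ℝ) :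
    log (gaussianPDFReal m v x) = -log (2 * π * v) / 2 - (x - m) ^ 2 / (2 * v) := by
  rw [gaussianPDFReal, log_mul (by positivity) (exp_pos _).ne', log_inv, log_sqrt (by positivity),
    log_exp]
  ring

lemma prod_gaussianReal_eq_withDensity (m₁ m₂ : ℝ) {v₁ v₂ : ℝ≥0} (hv₁ : v₁ ≠ 0) (hv₂ : v₂ ≠ 0) :
    (gaussianReal m₁ v₁).prod (gaussianReal m₂ v₂) = volume.withDensity fun p =>
      ENNReal.ofReal (gaussianPDFReal m₁ v₁ p.1 * gaussianPDFReal m₂ v₂ p.2) := by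
  rw [gaussianReal_of_var_ne_zero _ hv₁, gaussianReal_of_var_ne_zero _ hv₂,
    prod_withDensity (by fun_prop) (by fun_prop), ← Measure.volume_eq_prod]
  simp [gaussianPDF, ENNReal.ofReal_mul (gaussianPDFReal_nonneg _ _ _)]

noncomputable def linearGaussianKernel (c : ℝ) (v : ℝ≥0) : Kernel ℝ ℝ where
  toFun x := gaussianReal (c * x) v
  measurable' := by
    have := measurable_gaussianReal
    fun_prop

instance (c : ℝ) (v : ℝ≥0) : IsMarkovKernel (linearGaussianKernel c v) :=
  ⟨fun _ => inferInstanceAs (IsProbabilityMeasure (gaussianReal _ _))⟩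

@[simp] lemma linearGaussianKernel_apply (c : ℝ) (v : ℝ≥0) (x : ℝ) :
    linearGaussianKernel c v x = gaussianReal (c * x) v := rfl

lemma compProd_linearGaussianKernel (ν : Measure ℝ) [SFinite ν] (c : ℝ) {v : ℝ≥0} (hv : v ≠ 0) :
    ν ⊗ₘ linearGaussianKernel c v =
      (ν.prod volume).withDensity fun p => gaussianPDF (c * p.1) v p.2 := by
  have hκ : linearGaussianKernel c v =
      (Kernel.const ℝ volume).withDensity fun x y => gaussianPDF (c * x) v y := by
    ext1 x
    rw [Kernel.withDensity_apply _ (by fun_prop), linearGaussianKernel_apply,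
      gaussianReal_of_var_ne_zero _ hv, Kernel.const_apply]
  have := Kernel.IsSFiniteKernel.withDensity (Kernel.const ℝ volume)
    fun x y => (gaussianPDF_ne_top : gaussianPDF (c * x) v y ≠ ∞)
  rw [hκ, Measure.compProd_withDensity (by fun_prop), Measure.compProd_const]

section CompProd

variable {ν : Measure ℝ} (c : ℝ) (v : ℝ≥0)

lemma integrable_fst_sq_compProd_linearGaussianKernel [SFinite ν]
    (hν : Integrable (fun x => x ^ 2) ν) :
    Integrable (fun p : ℝ × ℝ => p.1 ^ 2) (ν ⊗ₘ linearGaussianKernel c v) := by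
  rw [Measure.integrable_compProd_iff (by fun_prop)]
  simpa using hν.norm

lemma integrable_snd_sq_compProd_linearGaussianKernel [IsFiniteMeasure ν]
    (hν : Integrable (fun x => x ^ 2) ν) :
    Integrable (fun p : ℝ × ℝ => p.2 ^ 2) (ν ⊗ₘ linearGaussianKernel c v) := by
  rw [Measure.integrable_compProd_iff (by fun_prop)]
  refine ⟨ae_of_all _ fun x => integrable_sq_gaussianReal _ _, ?_⟩
  simp only [norm_pow, Real.norm_eq_abs, sq_abs, linearGaussianKernel_apply,
    integral_sq_gaussianReal, mul_pow]
  exact (integrable_const _).add (hν.const_mul _)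

lemma integrable_fst_mul_snd_compProd_linearGaussianKernel [IsFiniteMeasure ν]
    (hν : Integrable (fun x => x ^ 2) ν) :
    Integrable (fun p : ℝ × ℝ => p.1 * p.2) (ν ⊗ₘ linearGaussianKernel c v) := by
  have h₁ := (memLp_two_iff_integrable_sq (by fun_prop)).2
    (integrable_fst_sq_compProd_linearGaussianKernel c v hν)
  have h₂ := (memLp_two_iff_integrable_sq (by fun_prop)).2
    (integrable_snd_sq_compProd_linearGaussianKernel c v hν)
  exact h₁.integrable_mul h₂

lemma integral_fst_sq_compProd_linearGaussianKernel [SFinite ν]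
    (hν : Integrable (fun x => x ^ 2) ν) :
    ∫ p, p.1 ^ 2 ∂(ν ⊗ₘ linearGaussianKernel c v) = ∫ x, x ^ 2 ∂ν := by
  simp [Measure.integral_compProd (integrable_fst_sq_compProd_linearGaussianKernel c v hν)]

lemma integral_snd_sq_compProd_linearGaussianKernel [IsProbabilityMeasure ν]
    (hν : Integrable (fun x => x ^ 2) ν) :
    ∫ p, p.2 ^ 2 ∂(ν ⊗ₘ linearGaussianKernel c v) = v + c ^ 2 * ∫ x, x ^ 2 ∂ν := by
  simp only [Measure.integral_compProd (integrable_snd_sq_compProd_linearGaussianKernel c v hν),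
    linearGaussianKernel_apply, integral_sq_gaussianReal, mul_pow]
  rw [integral_add (integrable_const _) (hν.const_mul _), integral_const_mul]
  simp

lemma integral_fst_mul_snd_compProd_linearGaussianKernel [IsFiniteMeasure ν]
    (hν : Integrable (fun x => x ^ 2) ν) :
    ∫ p, p.1 * p.2 ∂(ν ⊗ₘ linearGaussianKernel c v) = c * ∫ x, x ^ 2 ∂ν := by
  simp only [Measure.integral_compProd
      (integrable_fst_mul_snd_compProd_linearGaussianKernel c v hν),
    linearGaussianKernel_apply]
  rw [← integral_const_mul]
  congr with x
  rw [integral_const_mul, integral_id_gaussianReal]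
  ring

end CompProd

end ProbabilityTheory

lemma llr_withDensity_ofReal {α : Type*} [MeasurableSpace α] {μ : Measure α} [SigmaFinite μ]
    {f g : α → ℝ} (hf : Measurable f) (hg : Measurable g) (hf_pos : ∀ x, 0 < f x)
    (hg_pos : ∀ x, 0 < g x) :
    llr (μ.withDensity fun x => ENNReal.ofReal (f x))
        (μ.withDensity fun x => ENNReal.ofReal (g x)) =ᵐ[μ]
      fun x => log (f x) - log (g x) := by
  have hdiv := Measure.rnDeriv_withDensity_right (μ.withDensity fun x => ENNReal.ofReal (f x)) μ
    hg.ennreal_ofReal.aemeasurable (ae_of_all _ fun x => by simp [hg_pos x])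
    (ae_of_all _ fun _ => ENNReal.ofReal_ne_top)
  filter_upwards [hdiv, Measure.rnDeriv_withDensity μ hf.ennreal_ofReal] with x hx hx'
  rw [llr_def]
  dsimp only
  rw [hx, hx', ENNReal.toReal_mul, ENNReal.toReal_inv, ENNReal.toReal_ofReal (hf_pos x).le,
    ENNReal.toReal_ofReal (hg_pos x).le, inv_mul_eq_div, log_div (hf_pos x).ne' (hg_pos x).ne']

section BivGaussian

variable {s1 s2 l : ℝ}

lemma gaussianPDFReal_mul_gaussianPDFReal_eq_bivGaussian_density (hs1 : 0 < s1) (hs2 : 0 < s2)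
    (hl : l ^ 2 < 1) (x y : ℝ) :
    gaussianPDFReal 0 (s1 ^ 2).toNNReal x *
        gaussianPDFReal (l * s2 / s1 * x) (s2 ^ 2 * (1 - l ^ 2)).toNNReal y =
      (2 * π * s1 * s2 * √(1 - l ^ 2))⁻¹ *
        rexp (-(2 * (1 - l ^ 2))⁻¹ *
          ((x / s1) ^ 2 - 2 * l * (x / s1) * (y / s2) + (y / s2) ^ 2)) := by
  have hl' : 0 < 1 - l ^ 2 := by linarith
  have hsqrt : √(2 * π * s1 ^ 2) * √(2 * π * (s2 ^ 2 * (1 - l ^ 2))) =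
      2 * π * s1 * s2 * √(1 - l ^ 2) := by
    rw [← Real.sqrt_mul (by positivity),
      show 2 * π * s1 ^ 2 * (2 * π * (s2 ^ 2 * (1 - l ^ 2))) =
        (2 * π * s1 * s2) ^ 2 * (1 - l ^ 2) by ring,
      Real.sqrt_mul (by positivity), Real.sqrt_sq (by positivity)]
  have hexp : -(x - 0) ^ 2 / (2 * s1 ^ 2) +
        -(y - l * s2 / s1 * x) ^ 2 / (2 * (s2 ^ 2 * (1 - l ^ 2))) =
      -(2 * (1 - l ^ 2))⁻¹ * ((x / s1) ^ 2 - 2 * l * (x / s1) * (y / s2) + (y / s2) ^ 2) := by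
    field_simp
    ring
  simp only [gaussianPDFReal, Real.coe_toNNReal _ (by positivity : 0 ≤ s1 ^ 2),
    Real.coe_toNNReal _ (by positivity : 0 ≤ s2 ^ 2 * (1 - l ^ 2))]
  rw [mul_mul_mul_comm, ← mul_inv, hsqrt, ← Real.exp_add, hexp]

lemma bivGaussian_eq_withDensity (hs1 : 0 < s1) (hs2 : 0 < s2) (hl : l ^ 2 < 1) :
    bivGaussian s1 s2 l = volume.withDensity fun p => ENNReal.ofReal
      (gaussianPDFReal 0 (s1 ^ 2).toNNReal p.1 *
        gaussianPDFReal (l * s2 / s1 * p.1) (s2 ^ 2 * (1 - l ^ 2)).toNNReal p.2) := by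
  simp only [gaussianPDFReal_mul_gaussianPDFReal_eq_bivGaussian_density hs1 hs2 hl]
  rfl

lemma bivGaussian_eq_compProd (hs1 : 0 < s1) (hs2 : 0 < s2) (hl : l ^ 2 < 1) :
    bivGaussian s1 s2 l = gaussianReal 0 (s1 ^ 2).toNNReal ⊗ₘ
      linearGaussianKernel (l * s2 / s1) (s2 ^ 2 * (1 - l ^ 2)).toNNReal := by
  have hv₁ : (s1 ^ 2).toNNReal ≠ 0 := by simpa using hs1.ne'
  have hv₂ : (s2 ^ 2 * (1 - l ^ 2)).toNNReal ≠ 0 := by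
    simpa using mul_pos (pow_pos hs2 2) (sub_pos.2 hl)
  rw [compProd_linearGaussianKernel _ _ hv₂, gaussianReal_of_var_ne_zero _ hv₁,
    prod_withDensity_left (by fun_prop), ← withDensity_mul _ (by fun_prop) (by fun_prop),
    ← Measure.volume_eq_prod, bivGaussian_eq_withDensity hs1 hs2 hl]
  congr with p
  simp [gaussianPDF, ENNReal.ofReal_mul (gaussianPDFReal_nonneg _ _ _)]

lemma integral_quadratic_bivGaussian (hs1 : 0 < s1) (hs2 : 0 < s2) (hl : l ^ 2 < 1)
    (K a b d : ℝ) :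
    ∫ p, (K + a * p.1 ^ 2 + b * (p.1 * p.2) + d * p.2 ^ 2) ∂bivGaussian s1 s2 l =
      K + a * s1 ^ 2 + b * (l * s1 * s2) + d * s2 ^ 2 := by
  have h₁ := integrable_sq_gaussianReal 0 (s1 ^ 2).toNNReal
  have hm : ∫ x, x ^ 2 ∂gaussianReal 0 (s1 ^ 2).toNNReal = s1 ^ 2 := by
    simp [integral_sq_gaussianReal, sq_nonneg]
  rw [bivGaussian_eq_compProd hs1 hs2 hl]
  set c := l * s2 / s1
  set v := (s2 ^ 2 * (1 - l ^ 2)).toNNReal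
  have hv : (v : ℝ) = s2 ^ 2 * (1 - l ^ 2) := Real.coe_toNNReal _ (by nlinarith)
  have hxx := (integrable_fst_sq_compProd_linearGaussianKernel c v h₁).const_mul a
  have hxy := (integrable_fst_mul_snd_compProd_linearGaussianKernel c v h₁).const_mul b
  have hyy := (integrable_snd_sq_compProd_linearGaussianKernel c v h₁).const_mul d
  rw [integral_add (by exact ((integrable_const K).add hxx).add hxy) hyy,
    integral_add (by exact (integrable_const K).add hxx) hxy,
    integral_add (integrable_const K) hxx, integral_const,
    integral_const_mul, integral_const_mul, integral_const_mul,
    integral_fst_sq_compProd_linearGaussianKernel c v h₁,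
    integral_fst_mul_snd_compProd_linearGaussianKernel c v h₁,
    integral_snd_sq_compProd_linearGaussianKernel c v h₁, hm, hv]
  simp only [c, probReal_univ, smul_eq_mul, one_mul]
  field_simp
  ring

lemma llr_bivGaussian_prod_gaussianReal {σ : ℝ} (hs1 : 0 < s1) (hs2 : 0 < s2) (hσ : 0 < σ)
    (hl : l ^ 2 < 1) :
    llr (bivGaussian s1 s2 l) ((gaussianReal 0 (σ ^ 2).toNNReal).prod
        (gaussianReal 0 (s2 ^ 2).toNNReal)) =ᵐ[bivGaussian s1 s2 l] fun p =>
      log (gaussianPDFReal 0 (s1 ^ 2).toNNReal p.1) +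
        log (gaussianPDFReal (l * s2 / s1 * p.1) (s2 ^ 2 * (1 - l ^ 2)).toNNReal p.2) -
        log (gaussianPDFReal 0 (σ ^ 2).toNNReal p.1) -
        log (gaussianPDFReal 0 (s2 ^ 2).toNNReal p.2) := by
  have hv : ∀ {t : ℝ}, 0 < t → t.toNNReal ≠ 0 := fun ht => by simpa using ht
  have hpos : ∀ (m : ℝ) {t : ℝ}, 0 < t → ∀ x, 0 < gaussianPDFReal m t.toNNReal x :=
    fun m _ ht x => gaussianPDFReal_pos m _ x (hv ht)
  have hv₂ : 0 < s2 ^ 2 * (1 - l ^ 2) := mul_pos (by positivity) (by linarith)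
  rw [prod_gaussianReal_eq_withDensity _ _ (hv (pow_pos hσ 2)) (hv (pow_pos hs2 2)),
    bivGaussian_eq_withDensity hs1 hs2 hl]
  refine (withDensity_absolutelyContinuous _ _).ae_le ?_
  refine (llr_withDensity_ofReal (by fun_prop) (by fun_prop)
    (fun p => mul_pos (hpos _ (pow_pos hs1 2) _) (hpos _ hv₂ _))
    (fun p => mul_pos (hpos _ (pow_pos hσ 2) _) (hpos _ (pow_pos hs2 2) _))).trans
    (ae_of_all _ fun p => ?_)
  dsimp only
  rw [log_mul (hpos _ (pow_pos hs1 2) _).ne' (hpos _ hv₂ _).ne',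
    log_mul (hpos _ (pow_pos hσ 2) _).ne' (hpos _ (pow_pos hs2 2) _).ne']
  ring

lemma integral_llr_bivGaussian_prod_gaussianReal {σ : ℝ} (hs1 : 0 < s1) (hs2 : 0 < s2)
    (hσ : 0 < σ) (hl : l ^ 2 < 1) :
    ∫ p, llr (bivGaussian s1 s2 l) ((gaussianReal 0 (σ ^ 2).toNNReal).prod
        (gaussianReal 0 (s2 ^ 2).toNNReal)) p ∂bivGaussian s1 s2 l =
      (log (2 * π * σ ^ 2) + log (2 * π * s2 ^ 2) - log (2 * π * s1 ^ 2) -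
        log (2 * π * (s2 ^ 2 * (1 - l ^ 2)))) / 2 + s1 ^ 2 / (2 * σ ^ 2) - 1 / 2 := by
  have hl' : 0 < 1 - l ^ 2 := by linarith
  have hτ : 0 < s2 ^ 2 * (1 - l ^ 2) := mul_pos (by positivity) hl'
  have hlog : ∀ (m : ℝ) {t : ℝ}, 0 < t → ∀ x,
      log (gaussianPDFReal m t.toNNReal x) = -log (2 * π * t) / 2 - (x - m) ^ 2 / (2 * t) :=
    fun m t ht x => by rw [log_gaussianPDFReal m (by simpa using ht), Real.coe_toNNReal _ ht.le]
  rw [integral_congr_ae (llr_bivGaussian_prod_gaussianReal hs1 hs2 hσ hl)]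
  set c := l * s2 / s1
  set τ := s2 ^ 2 * (1 - l ^ 2)
  have hquad : ∀ p : ℝ × ℝ,
      log (gaussianPDFReal 0 (s1 ^ 2).toNNReal p.1) +
          log (gaussianPDFReal (c * p.1) τ.toNNReal p.2) -
          log (gaussianPDFReal 0 (σ ^ 2).toNNReal p.1) -
          log (gaussianPDFReal 0 (s2 ^ 2).toNNReal p.2) =
        (log (2 * π * σ ^ 2) + log (2 * π * s2 ^ 2) - log (2 * π * s1 ^ 2) -
            log (2 * π * τ)) / 2 +
          (1 / (2 * σ ^ 2) - 1 / (2 * s1 ^ 2) - c ^ 2 / (2 * τ)) * p.1 ^ 2 +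
          c / τ * (p.1 * p.2) + (1 / (2 * s2 ^ 2) - 1 / (2 * τ)) * p.2 ^ 2 := fun p => by
    rw [hlog _ (pow_pos hs1 2), hlog _ hτ, hlog _ (pow_pos hσ 2), hlog _ (pow_pos hs2 2)]
    clear_value c τ
    ring
  rw [funext hquad, integral_quadratic_bivGaussian hs1 hs2 hl]
  simp only [c, τ]
  field_simp [hl'.ne']
  ring

end BivGaussian

/-- Let `μ₁` be the centered bivariate Gaussian measure on `ℝ²` with covariance
matrix `[[σ̃², λσ̃σ_e], [λσ̃σ_e, σ_e²]]` and `μ₀ = N(0, σ_γ²) ⊗ N(0, σ_e²)`.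
Then `D(μ₁ ‖ μ₀) = ½ log(1/(1−λ²)) + ½(σ̃²/σ_γ² − 1 − log(σ̃²/σ_γ²))`. -/
theorem klDiv_bivGaussian_prodGaussian
    (σt σe σγ l : ℝ) (hσt : 0 < σt) (hσe : 0 < σe) (hσγ : 0 < σγ)
    (hl : l ∈ Set.Ioo (-1 : ℝ) 1) :
    klDivR (bivGaussian σt σe l)
        ((gaussianReal 0 (σγ ^ 2).toNNReal).prod (gaussianReal 0 (σe ^ 2).toNNReal)) =
      1 / 2 * Real.log (1 / (1 - l ^ 2)) +
        1 / 2 * (σt ^ 2 / σγ ^ 2 - 1 - Real.log (σt ^ 2 / σγ ^ 2)) := by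
  have hl₂ : 0 < 1 - l ^ 2 := by nlinarith [hl.1, hl.2]
  show ∫ p, llr _ _ p ∂_ = _
  rw [integral_llr_bivGaussian_prod_gaussianReal hσt hσe hσγ (by linarith)]
  have h2π : 0 < 2 * π := by positivity
  rw [log_mul h2π.ne' (by positivity), log_mul h2π.ne' (by positivity),
    log_mul h2π.ne' (by positivity), log_mul h2π.ne' (by positivity),
    log_mul (by positivity) hl₂.ne', one_div (1 - l ^ 2), log_inv,
    log_div (by positivity) (by positivity)]
  field_simp
  ring
end

section
/- (Theorem 2) Under the healthy stationary closed-loop model, let J(σ_e²) := W·E[x_k²] + U·E[u_k²] denote the stationary LQG cost with watermarking variance σ_e², where u_k = L x̂_{k|k} + e_k and e_k is independent of x̂_{k|k}. Then the increase in the LQG cost due to watermarking satisfies ΔLQG := J(σ_e²) − J(0) = ( U + B²(W + L² U) / (1 − (A + B L)²) ) σ_e²; equivalently, σ_e² = ΔLQG / ( U + B²(W + L² U)/(1 − (A + B L)²) ). -/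
/-!
Write `ρ = A + B L`. The filtered estimate is the moving average
`x̂_k = ∑ ρ^i (b e_{k-1-i} + K γ_{k-i})` (with `b = B`, or `b = 0` without watermarking) of two
mutually orthogonal white noises. Its terms have geometrically decaying `L²` norms, so the series
converges in `L²` and almost everywhere to the same limit, and its correlations with the noises can
be computed term by term: `x̂_k` is orthogonal to `e_n` for `n ≥ k` and to `γ_n` for `n > k`, and
`E[x̂_k²] = (b² σ_e² + K² σ_γ²) / (1 - ρ²)`. Hence `E[u_k²] = L² E[x̂_k²] + σ_e²` and
`C² E[x_k²] + R = E[y_k²] = σ_γ² + C² (ρ² E[x̂_{k-1}²] + b² σ_e²)`. The two loops differ only in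
the `b² σ_e²` terms, which contribute `(U + B² (W + L² U) / (1 - ρ²)) σ_e²` to the cost.
-/

open MeasureTheory ProbabilityTheory
open scoped ENNReal NNReal InnerProductSpace

namespace LQGWatermark

variable {Ω : Type*} [MeasurableSpace Ω] {μ : Measure Ω}

theorem integral_sq_mul_add_mul_of_integral_mul_eq_zero {f g : Ω → ℝ} (hf : MemLp f 2 μ)
    (hg : MemLp g 2 μ) (hfg : ∫ ω, f ω * g ω ∂μ = 0) (a b : ℝ) :
    ∫ ω, (a * f ω + b * g ω) ^ 2 ∂μ = a ^ 2 * ∫ ω, f ω ^ 2 ∂μ + b ^ 2 * ∫ ω, g ω ^ 2 ∂μ := by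
  have hfg' : Integrable (fun ω => f ω * g ω) μ := hf.integrable_mul hg
  have hf2 := hf.integrable_sq
  have hg2 := hg.integrable_sq
  have hsq : Integrable (fun ω => a ^ 2 * f ω ^ 2 + b ^ 2 * g ω ^ 2) μ :=
    (hf2.const_mul _).add (hg2.const_mul _)
  have hexp : (fun ω => (a * f ω + b * g ω) ^ 2)
      = fun ω => a ^ 2 * f ω ^ 2 + b ^ 2 * g ω ^ 2 + 2 * a * b * (f ω * g ω) := by
    funext ω; ring
  rw [hexp, integral_add hsq (hfg'.const_mul _),
    integral_add (hf2.const_mul _) (hg2.const_mul _),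
    integral_const_mul, integral_const_mul, integral_const_mul, hfg, mul_zero, add_zero]

theorem integral_sq_eq_of_eq_mul_add {x v y : Ω → ℝ} (C : ℝ) (hx : MemLp x 2 μ) (hv : MemLp v 2 μ)
    (hvm : ∫ ω, v ω ∂μ = 0) (hxv : IndepFun x v μ) (hyx : ∀ ω, y ω = C * x ω + v ω) :
    ∫ ω, y ω ^ 2 ∂μ = C ^ 2 * ∫ ω, x ω ^ 2 ∂μ + ∫ ω, v ω ^ 2 ∂μ := by
  have hxv0 : ∫ ω, x ω * v ω ∂μ = 0 := by
    rw [hxv.integral_fun_mul_eq_mul_integral hx.1 hv.1, hvm, mul_zero]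
  simpa [hyx] using integral_sq_mul_add_mul_of_integral_mul_eq_zero hx hv hxv0 C 1

theorem integral_mul_add_mul_mul {f g h : Ω → ℝ} (hf : MemLp f 2 μ) (hg : MemLp g 2 μ)
    (hh : MemLp h 2 μ) (a b : ℝ) :
    ∫ ω, (a * f ω + b * g ω) * h ω ∂μ = a * ∫ ω, f ω * h ω ∂μ + b * ∫ ω, g ω * h ω ∂μ := by
  have hexp : (fun ω => (a * f ω + b * g ω) * h ω)
      = fun ω => a * (f ω * h ω) + b * (g ω * h ω) := by
    funext ω; ring
  have hfh : Integrable (fun ω => f ω * h ω) μ := hf.integrable_mul hh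
  have hgh : Integrable (fun ω => g ω * h ω) μ := hg.integrable_mul hh
  rw [hexp, integral_add (hfh.const_mul _) (hgh.const_mul _),
    integral_const_mul, integral_const_mul]

theorem ae_eq_tsum_toLp {E : Type*} [NormedAddCommGroup E] [CompleteSpace E] {p : ℝ≥0∞}
    [Fact (1 ≤ p)] {ι : Type*} [Countable ι] {g : ι → Ω → E} (hg : ∀ i, MemLp (g i) p μ)
    (hsum : ∑' i, eLpNorm (g i) p μ ≠ ∞) :
    (fun ω => ∑' i, g i ω) =ᵐ[μ] ⇑(∑' i, (hg i).toLp (g i)) := by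
  have hsum' : ∑' i, ‖(hg i).toLp (g i)‖ₑ ≠ ∞ := by simpa only [Lp.enorm_toLp] using hsum
  filter_upwards [Lp.coeFn_tsum hsum', ae_all_iff.2 fun i => (hg i).coeFn_toLp] with ω hω hgω
  rw [hω]
  exact tsum_congr fun i => (hgω i).symm

theorem memLp_tsum_of_tsum_eLpNorm_ne_top {E : Type*} [NormedAddCommGroup E] [CompleteSpace E]
    {p : ℝ≥0∞} [Fact (1 ≤ p)] {ι : Type*} [Countable ι] {g : ι → Ω → E}
    (hg : ∀ i, MemLp (g i) p μ) (hsum : ∑' i, eLpNorm (g i) p μ ≠ ∞) :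
    MemLp (fun ω => ∑' i, g i ω) p μ :=
  (Lp.memLp _).ae_eq (ae_eq_tsum_toLp hg hsum).symm

theorem integral_tsum_mul_of_tsum_eLpNorm_ne_top {ι : Type*} [Countable ι] {g : ι → Ω → ℝ}
    (hg : ∀ i, MemLp (g i) 2 μ) (hsum : ∑' i, eLpNorm (g i) 2 μ ≠ ∞) {h : Ω → ℝ}
    (hh : MemLp h 2 μ) :
    ∫ ω, (∑' i, g i ω) * h ω ∂μ = ∑' i, ∫ ω, g i ω * h ω ∂μ := by
  have hsum' : ∑' i, ‖(hg i).toLp (g i)‖ₑ ≠ ∞ := by simpa only [Lp.enorm_toLp] using hsum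
  have hinner : ∀ (f : Ω → ℝ) (F : Lp ℝ 2 μ), f =ᵐ[μ] F →
      ∫ ω, f ω * h ω ∂μ = ⟪hh.toLp h, F⟫_ℝ := by
    intro f F hfF
    rw [L2.inner_def]
    refine integral_congr_ae ?_
    filter_upwards [hfF, hh.coeFn_toLp] with ω hfω hhω
    rw [hfω, hhω, Real.inner_apply, mul_comm]
  rw [hinner _ _ (ae_eq_tsum_toLp hg hsum)]
  refine ((innerSL ℝ (hh.toLp h)).map_tsum (Summable.of_enorm hsum')).trans ?_
  exact tsum_congr fun i => (hinner _ _ (hg i).coeFn_toLp.symm).symm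

theorem eLpNorm_two_eq_ofReal_sqrt_integral_sq {f : Ω → ℝ} (hf : MemLp f 2 μ) :
    eLpNorm f 2 μ = ENNReal.ofReal √(∫ ω, f ω ^ 2 ∂μ) := by
  rw [hf.eLpNorm_eq_integral_rpow_norm two_ne_zero ENNReal.ofNat_ne_top, Real.sqrt_eq_rpow]
  simp

theorem tsum_eLpNorm_pow_mul_ne_top {f : ℕ → Ω → ℝ} {M : ℝ≥0∞} (hM : M ≠ ∞)
    (hf : ∀ i, eLpNorm (f i) 2 μ ≤ M) {ρ : ℝ} (hρ : |ρ| < 1) :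
    ∑' i, eLpNorm (fun ω => ρ ^ i * f i ω) 2 μ ≠ ∞ := by
  have hρ' : ‖ρ‖ₑ < 1 := by simpa [← ofReal_norm, Real.norm_eq_abs] using hρ
  have hbound : ∀ i, eLpNorm (fun ω => ρ ^ i * f i ω) 2 μ ≤ ‖ρ‖ₑ ^ i * M := fun i => by
    rw [← enorm_pow]
    exact (eLpNorm_const_smul (ρ ^ i) (f i) 2 μ).trans_le (by gcongr; exact hf i)
  refine ne_top_of_le_ne_top ?_ (ENNReal.tsum_le_tsum hbound)
  rw [ENNReal.tsum_mul_right, ENNReal.tsum_geometric]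
  exact ENNReal.mul_ne_top (ENNReal.inv_ne_top.2 (tsub_pos_of_lt hρ').ne') hM

theorem hasLaw_of_map_eq {𝓧 : Type*} [MeasurableSpace 𝓧] {X : Ω → 𝓧} {ν : Measure 𝓧} [NeZero ν]
    (h : μ.map X = ν) : HasLaw X ν μ :=
  ⟨.of_map_ne_zero (h ▸ NeZero.ne ν), h⟩

theorem memLp_of_hasLaw_gaussianReal {X : Ω → ℝ} {m : ℝ} {v : ℝ≥0}
    (hX : HasLaw X (gaussianReal m v) μ) (p : ℝ≥0) : MemLp X p μ :=
  (memLp_map_measure_iff aestronglyMeasurable_id hX.aemeasurable).1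
    (hX.map_eq ▸ memLp_id_gaussianReal p)

theorem integral_of_hasLaw_gaussianReal {X : Ω → ℝ} {m : ℝ} {v : ℝ≥0}
    (hX : HasLaw X (gaussianReal m v) μ) : ∫ ω, X ω ∂μ = m :=
  hX.integral_eq.trans integral_id_gaussianReal

theorem integral_sq_of_hasLaw_gaussianReal {X : Ω → ℝ} {v : ℝ≥0}
    (hX : HasLaw X (gaussianReal 0 v) μ) : ∫ ω, X ω ^ 2 ∂μ = v := by
  rw [← variance_of_integral_eq_zero hX.aemeasurable (integral_of_hasLaw_gaussianReal hX),
    hX.variance_eq, variance_id_gaussianReal]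

theorem integral_mul_eq_ite_of_iIndepFun {ι : Type*} [DecidableEq ι] {ξ : ι → Ω → ℝ}
    (hind : iIndepFun ξ μ) (hξ : ∀ s, AEStronglyMeasurable (ξ s) μ)
    (hmean : ∀ s, ∫ ω, ξ s ω ∂μ = 0) (s t : ι) :
    ∫ ω, ξ s ω * ξ t ω ∂μ = if s = t then ∫ ω, ξ s ω ^ 2 ∂μ else 0 := by
  split_ifs with hst
  · subst hst
    simp_rw [sq]
  · rw [(hind.indepFun hst).integral_fun_mul_eq_mul_integral (hξ s) (hξ t), hmean, zero_mul]

/-- White noise in the wide sense: only second moments are recorded. -/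
structure IsWhiteNoisePair (μ : Measure Ω) (e γ : ℤ → Ω → ℝ) (σe2 σγ2 : ℝ) : Prop where
  memLp_fst : ∀ i, MemLp (e i) 2 μ
  memLp_snd : ∀ i, MemLp (γ i) 2 μ
  integral_fst_mul_fst : ∀ i j, ∫ ω, e i ω * e j ω ∂μ = if i = j then σe2 else 0
  integral_snd_mul_snd : ∀ i j, ∫ ω, γ i ω * γ j ω ∂μ = if i = j then σγ2 else 0
  integral_fst_mul_snd : ∀ i j, ∫ ω, e i ω * γ j ω ∂μ = 0

theorem isWhiteNoisePair_of_iIndepFun {e γ : ℤ → Ω → ℝ} {ve vγ : ℝ≥0}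
    (he : ∀ i, HasLaw (e i) (gaussianReal 0 ve) μ) (hγ : ∀ i, HasLaw (γ i) (gaussianReal 0 vγ) μ)
    (hind : iIndepFun (Sum.elim e γ) μ) :
    IsWhiteNoisePair μ e γ ve vγ := by
  have hlaw : ∀ s, HasLaw (Sum.elim e γ s)
      (gaussianReal 0 (Sum.elim (fun _ => ve) (fun _ => vγ) s)) μ := by
    rintro (i | i)
    exacts [he i, hγ i]
  have hcov := integral_mul_eq_ite_of_iIndepFun hind
    (fun s => (memLp_of_hasLaw_gaussianReal (hlaw s) 2).aestronglyMeasurable)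
    (fun s => integral_of_hasLaw_gaussianReal (hlaw s))
  refine ⟨fun i => memLp_of_hasLaw_gaussianReal (he i) 2,
    fun i => memLp_of_hasLaw_gaussianReal (hγ i) 2, fun i j => ?_, fun i j => ?_, fun i j => ?_⟩
  · simpa [integral_sq_of_hasLaw_gaussianReal (he i)] using hcov (.inl i) (.inl j)
  · simpa [integral_sq_of_hasLaw_gaussianReal (hγ i)] using hcov (.inr i) (.inr j)
  · simpa using hcov (.inl i) (.inr j)

namespace IsWhiteNoisePair

variable {e γ : ℤ → Ω → ℝ} {σe2 σγ2 : ℝ}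

theorem integral_fst_sq (hn : IsWhiteNoisePair μ e γ σe2 σγ2) (i : ℤ) :
    ∫ ω, e i ω ^ 2 ∂μ = σe2 := by
  simp_rw [sq]
  rw [hn.integral_fst_mul_fst, if_pos rfl]

theorem integral_snd_sq (hn : IsWhiteNoisePair μ e γ σe2 σγ2) (i : ℤ) :
    ∫ ω, γ i ω ^ 2 ∂μ = σγ2 := by
  simp_rw [sq]
  rw [hn.integral_snd_mul_snd, if_pos rfl]

theorem integral_snd_mul_fst (hn : IsWhiteNoisePair μ e γ σe2 σγ2) (i j : ℤ) :
    ∫ ω, γ i ω * e j ω ∂μ = 0 := by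
  simp_rw [mul_comm (γ i _)]
  exact hn.integral_fst_mul_snd j i

theorem eLpNorm_fst (hn : IsWhiteNoisePair μ e γ σe2 σγ2) (i : ℤ) :
    eLpNorm (e i) 2 μ = ENNReal.ofReal √σe2 := by
  rw [eLpNorm_two_eq_ofReal_sqrt_integral_sq (hn.memLp_fst i), hn.integral_fst_sq]

theorem eLpNorm_snd (hn : IsWhiteNoisePair μ e γ σe2 σγ2) (i : ℤ) :
    eLpNorm (γ i) 2 μ = ENNReal.ofReal √σγ2 := by
  rw [eLpNorm_two_eq_ofReal_sqrt_integral_sq (hn.memLp_snd i), hn.integral_snd_sq]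

end IsWhiteNoisePair

noncomputable def stationaryEstimate (ρ b K : ℝ) (e γ : ℤ → Ω → ℝ) (k : ℤ) (ω : Ω) : ℝ :=
  ∑' i : ℕ, ρ ^ i * (b * e (k - 1 - i) ω + K * γ (k - i) ω)

section StationaryEstimate

variable {e γ : ℤ → Ω → ℝ} {σe2 σγ2 ρ b K : ℝ}

theorem memLp_stationaryTerm (hn : IsWhiteNoisePair μ e γ σe2 σγ2) (k : ℤ) (i : ℕ) :
    MemLp (fun ω => ρ ^ i * (b * e (k - 1 - i) ω + K * γ (k - i) ω)) 2 μ :=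
  (((hn.memLp_fst _).const_mul b).add ((hn.memLp_snd _).const_mul K)).const_mul _

theorem tsum_eLpNorm_stationaryTerm_ne_top (hn : IsWhiteNoisePair μ e γ σe2 σγ2) (hρ : |ρ| < 1)
    (k : ℤ) :
    ∑' i : ℕ, eLpNorm (fun ω => ρ ^ i * (b * e (k - 1 - i) ω + K * γ (k - i) ω)) 2 μ ≠ ∞ := by
  refine tsum_eLpNorm_pow_mul_ne_top (M := ‖b‖ₑ * ENNReal.ofReal √σe2 + ‖K‖ₑ * ENNReal.ofReal √σγ2)
    (by finiteness) (fun i => ?_) hρ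
  refine (eLpNorm_add_le ((hn.memLp_fst _).const_mul b).1 ((hn.memLp_snd _).const_mul K).1
    one_le_two).trans_eq ?_
  rw [← hn.eLpNorm_fst (k - 1 - i), ← hn.eLpNorm_snd (k - i), ← eLpNorm_const_smul,
    ← eLpNorm_const_smul]
  rfl

theorem memLp_stationaryEstimate (hn : IsWhiteNoisePair μ e γ σe2 σγ2) (hρ : |ρ| < 1) (k : ℤ) :
    MemLp (stationaryEstimate ρ b K e γ k) 2 μ :=
  memLp_tsum_of_tsum_eLpNorm_ne_top (memLp_stationaryTerm hn k)
    (tsum_eLpNorm_stationaryTerm_ne_top hn hρ k)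

theorem integral_stationaryEstimate_mul (hn : IsWhiteNoisePair μ e γ σe2 σγ2) (hρ : |ρ| < 1)
    (k : ℤ) {h : Ω → ℝ} (hh : MemLp h 2 μ) :
    ∫ ω, stationaryEstimate ρ b K e γ k ω * h ω ∂μ =
      ∑' i : ℕ, ρ ^ i * (b * ∫ ω, e (k - 1 - i) ω * h ω ∂μ + K * ∫ ω, γ (k - i) ω * h ω ∂μ) := by
  unfold stationaryEstimate
  rw [integral_tsum_mul_of_tsum_eLpNorm_ne_top (memLp_stationaryTerm hn k)
    (tsum_eLpNorm_stationaryTerm_ne_top hn hρ k) hh]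
  refine tsum_congr fun i => ?_
  simp_rw [mul_assoc]
  rw [integral_const_mul, integral_mul_add_mul_mul (hn.memLp_fst _) (hn.memLp_snd _) hh]

theorem integral_stationaryEstimate_mul_fst_of_le (hn : IsWhiteNoisePair μ e γ σe2 σγ2)
    (hρ : |ρ| < 1) {k n : ℤ} (hkn : k ≤ n) :
    ∫ ω, stationaryEstimate ρ b K e γ k ω * e n ω ∂μ = 0 := by
  have hne : ∀ i : ℕ, k - 1 - i ≠ n := fun i => by omega
  simp [integral_stationaryEstimate_mul hn hρ k (hn.memLp_fst n), hn.integral_fst_mul_fst,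
    hn.integral_snd_mul_fst, hne]

theorem integral_stationaryEstimate_mul_snd_of_lt (hn : IsWhiteNoisePair μ e γ σe2 σγ2)
    (hρ : |ρ| < 1) {k n : ℤ} (hkn : k < n) :
    ∫ ω, stationaryEstimate ρ b K e γ k ω * γ n ω ∂μ = 0 := by
  have hne : ∀ i : ℕ, k - i ≠ n := fun i => by omega
  simp [integral_stationaryEstimate_mul hn hρ k (hn.memLp_snd n), hn.integral_snd_mul_snd,
    hn.integral_fst_mul_snd, hne]

theorem integral_stationaryEstimate_mul_fst_sub (hn : IsWhiteNoisePair μ e γ σe2 σγ2)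
    (hρ : |ρ| < 1) (k : ℤ) (j : ℕ) :
    ∫ ω, stationaryEstimate ρ b K e γ k ω * e (k - 1 - j) ω ∂μ = ρ ^ j * b * σe2 := by
  rw [integral_stationaryEstimate_mul hn hρ k (hn.memLp_fst _), tsum_eq_single j]
  · simp [hn.integral_fst_mul_fst, hn.integral_snd_mul_fst, mul_assoc]
  · intro i hij
    simp [hn.integral_fst_mul_fst, hn.integral_snd_mul_fst, hij]

theorem integral_stationaryEstimate_mul_snd_sub (hn : IsWhiteNoisePair μ e γ σe2 σγ2)
    (hρ : |ρ| < 1) (k : ℤ) (j : ℕ) :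
    ∫ ω, stationaryEstimate ρ b K e γ k ω * γ (k - j) ω ∂μ = ρ ^ j * K * σγ2 := by
  rw [integral_stationaryEstimate_mul hn hρ k (hn.memLp_snd _), tsum_eq_single j]
  · simp [hn.integral_snd_mul_snd, hn.integral_fst_mul_snd, mul_assoc]
  · intro i hij
    simp [hn.integral_snd_mul_snd, hn.integral_fst_mul_snd, hij]

theorem integral_stationaryEstimate_sq (hn : IsWhiteNoisePair μ e γ σe2 σγ2) (hρ : |ρ| < 1)
    (k : ℤ) :
    ∫ ω, stationaryEstimate ρ b K e γ k ω ^ 2 ∂μ = (b ^ 2 * σe2 + K ^ 2 * σγ2) / (1 - ρ ^ 2) := by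
  have hcomm : ∀ f g : Ω → ℝ, ∫ ω, f ω * g ω ∂μ = ∫ ω, g ω * f ω ∂μ := fun f g => by
    simp_rw [mul_comm (f _)]
  have hρ2 : ρ ^ 2 < 1 := (sq_lt_one_iff_abs_lt_one ρ).2 hρ
  simp_rw [sq (stationaryEstimate ρ b K e γ k _)]
  rw [integral_stationaryEstimate_mul hn hρ k (memLp_stationaryEstimate hn hρ k)]
  simp_rw [hcomm (e _), hcomm (γ _), integral_stationaryEstimate_mul_fst_sub hn hρ,
    integral_stationaryEstimate_mul_snd_sub hn hρ]
  have hterm : ∀ i : ℕ, ρ ^ i * (b * (ρ ^ i * b * σe2) + K * (ρ ^ i * K * σγ2))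
      = (b ^ 2 * σe2 + K ^ 2 * σγ2) * (ρ ^ 2) ^ i := fun i => by ring
  rw [tsum_congr hterm, tsum_mul_left, tsum_geometric_of_lt_one (sq_nonneg ρ) hρ2, div_eq_mul_inv]

theorem integral_control_sq (hn : IsWhiteNoisePair μ e γ σe2 σγ2) (hρ : |ρ| < 1) (k : ℤ)
    {L c : ℝ} {u : Ω → ℝ} (hu : ∀ ω, u ω = L * stationaryEstimate ρ b K e γ k ω + c * e k ω) :
    ∫ ω, u ω ^ 2 ∂μ = L ^ 2 * ((b ^ 2 * σe2 + K ^ 2 * σγ2) / (1 - ρ ^ 2)) + c ^ 2 * σe2 := by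
  simp_rw [hu]
  rw [integral_sq_mul_add_mul_of_integral_mul_eq_zero (memLp_stationaryEstimate hn hρ k)
    (hn.memLp_fst k) (integral_stationaryEstimate_mul_fst_of_le hn hρ le_rfl),
    integral_stationaryEstimate_sq hn hρ, hn.integral_fst_sq]

theorem integral_measurement_sq (hn : IsWhiteNoisePair μ e γ σe2 σγ2) (hρ : |ρ| < 1) (k : ℤ)
    (C : ℝ) :
    ∫ ω, (γ k ω + C * (ρ * stationaryEstimate ρ b K e γ (k - 1) ω + b * e (k - 1) ω)) ^ 2 ∂μ
      = σγ2 + C ^ 2 * (ρ ^ 2 * ((b ^ 2 * σe2 + K ^ 2 * σγ2) / (1 - ρ ^ 2)) + b ^ 2 * σe2) := by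
  have hS := memLp_stationaryEstimate (b := b) (K := K) hn hρ (k - 1)
  have hZ : MemLp (fun ω => ρ * stationaryEstimate ρ b K e γ (k - 1) ω + b * e (k - 1) ω) 2 μ :=
    (hS.const_mul ρ).add ((hn.memLp_fst _).const_mul b)
  have hZ2 := integral_sq_mul_add_mul_of_integral_mul_eq_zero hS (hn.memLp_fst _)
    (integral_stationaryEstimate_mul_fst_of_le hn hρ le_rfl) ρ b
  have hZγ :
      ∫ ω, (ρ * stationaryEstimate ρ b K e γ (k - 1) ω + b * e (k - 1) ω) * γ k ω ∂μ = 0 := by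
    rw [integral_mul_add_mul_mul hS (hn.memLp_fst _) (hn.memLp_snd k),
      integral_stationaryEstimate_mul_snd_of_lt hn hρ (by omega), hn.integral_fst_mul_snd]
    ring
  have h := integral_sq_mul_add_mul_of_integral_mul_eq_zero hZ (hn.memLp_snd k) hZγ C 1
  simp only [one_mul, one_pow] at h
  simp_rw [add_comm (γ k _)]
  rw [h, hZ2, integral_stationaryEstimate_sq hn hρ, hn.integral_fst_sq, hn.integral_snd_sq]
  ring

theorem integral_state_sq (hn : IsWhiteNoisePair μ e γ σe2 σγ2) (hρ : |ρ| < 1) (k : ℤ)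
    {C R : ℝ} (hC : C ≠ 0) {x v y : Ω → ℝ} (hx : MemLp x 2 μ) (hv : MemLp v 2 μ)
    (hvm : ∫ ω, v ω ∂μ = 0) (hvvar : ∫ ω, v ω ^ 2 ∂μ = R) (hxv : IndepFun x v μ)
    (hy : ∀ ω, y ω = γ k ω + C * (ρ * stationaryEstimate ρ b K e γ (k - 1) ω + b * e (k - 1) ω))
    (hyx : ∀ ω, y ω = C * x ω + v ω) :
    ∫ ω, x ω ^ 2 ∂μ
      = (σγ2 - R) / C ^ 2 + ρ ^ 2 * ((b ^ 2 * σe2 + K ^ 2 * σγ2) / (1 - ρ ^ 2)) + b ^ 2 * σe2 := by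
  have h := integral_sq_eq_of_eq_mul_add C hx hv hvm hxv hyx
  simp only [hy] at h
  rw [integral_measurement_sq hn hρ k C, hvvar] at h
  generalize (b ^ 2 * σe2 + K ^ 2 * σγ2) / (1 - ρ ^ 2) = V at h ⊢
  field_simp
  linear_combination -h

end StationaryEstimate

end LQGWatermark

open LQGWatermark

theorem watermarking_LQG_cost_increase_general
    {Ω : Type*} [MeasurableSpace Ω] (μ : Measure Ω)
    (e γ : ℤ → Ω → ℝ) (A B C K L P R σe W U : ℝ)
    (hW : 0 < W) (hU : 0 < U) (hC : C ≠ 0)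
    (hA : |A + B * L| < 1)
    -- `e` is i.i.d. `N(0, σ_e²)`, `γ` is i.i.d. `N(0, C²P + R)` (the
    -- steady-state Kalman innovations), mutually independent
    (helaw : ∀ k, Measure.map (e k) μ = gaussianReal 0 (σe ^ 2).toNNReal)
    (hγlaw : ∀ k, Measure.map (γ k) μ = gaussianReal 0 (C ^ 2 * P + R).toNNReal)
    (hindep : iIndepFun (Sum.elim e γ) μ)
    -- the stationary filtered estimate with watermarking, and the one without
    -- (i.e. the same series with `σ_e² = 0`, so the `e`-terms vanish)
    (xhat xhat0 : ℤ → Ω → ℝ)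
    (hxhat : ∀ (k : ℤ) (ω : Ω), xhat k ω =
      ∑' i : ℕ, (A + B * L) ^ i * (B * e (k - 1 - (i : ℤ)) ω + K * γ (k - (i : ℤ)) ω))
    (hxhat0 : ∀ (k : ℤ) (ω : Ω), xhat0 k ω =
      ∑' i : ℕ, (A + B * L) ^ i * (K * γ (k - (i : ℤ)) ω))
    -- the measurements with and without watermarking
    (y y0 : ℤ → Ω → ℝ)
    (hy : ∀ (k : ℤ) (ω : Ω), y k ω =
      γ k ω + C * ((A + B * L) * xhat (k - 1) ω + B * e (k - 1) ω))
    (hy0 : ∀ (k : ℤ) (ω : Ω), y0 k ω =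
      γ k ω + C * ((A + B * L) * xhat0 (k - 1) ω))
    -- the stationary states: centered, with `y_k = C x_k + v_k`, where `v_k` is
    -- centered measurement noise of variance `R` independent of `x_k`
    (x v x0 v0 : ℤ → Ω → ℝ)
    (hxL2 : ∀ k, MemLp (x k) 2 μ) (hvL2 : ∀ k, MemLp (v k) 2 μ)
    (hx0L2 : ∀ k, MemLp (x0 k) 2 μ) (hv0L2 : ∀ k, MemLp (v0 k) 2 μ)
    (hvm : ∀ k, ∫ ω, v k ω ∂μ = 0)
    (hv0m : ∀ k, ∫ ω, v0 k ω ∂μ = 0)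
    (hvvar : ∀ k, ∫ ω, (v k ω) ^ 2 ∂μ = R) (hv0var : ∀ k, ∫ ω, (v0 k ω) ^ 2 ∂μ = R)
    (hxv : ∀ k, IndepFun (x k) (v k) μ) (hx0v0 : ∀ k, IndepFun (x0 k) (v0 k) μ)
    (hyx : ∀ (k : ℤ) (ω : Ω), y k ω = C * x k ω + v k ω)
    (hy0x0 : ∀ (k : ℤ) (ω : Ω), y0 k ω = C * x0 k ω + v0 k ω)
    -- the controls with and without watermarking
    (u u0 : ℤ → Ω → ℝ)
    (hu : ∀ (k : ℤ) (ω : Ω), u k ω = L * xhat k ω + e k ω)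
    (hu0 : ∀ (k : ℤ) (ω : Ω), u0 k ω = L * xhat0 k ω) :
    -- the stationary LQG costs with and without watermarking
    ∀ k : ℤ,
      letI Jw : ℝ := W * ∫ ω, (x k ω) ^ 2 ∂μ + U * ∫ ω, (u k ω) ^ 2 ∂μ
      letI Jn : ℝ := W * ∫ ω, (x0 k ω) ^ 2 ∂μ + U * ∫ ω, (u0 k ω) ^ 2 ∂μ
      Jw - Jn = (U + B ^ 2 * (W + L ^ 2 * U) / (1 - (A + B * L) ^ 2)) * σe ^ 2 ∧
        σe ^ 2 = (Jw - Jn) / (U + B ^ 2 * (W + L ^ 2 * U) / (1 - (A + B * L) ^ 2)) := by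
  intro k
  have hn := isWhiteNoisePair_of_iIndepFun (fun i => hasLaw_of_map_eq (helaw i))
    (fun i => hasLaw_of_map_eq (hγlaw i)) hindep
  have hxhat' : xhat = stationaryEstimate (A + B * L) B K e γ := funext₂ hxhat
  have hxhat0' : xhat0 = stationaryEstimate (A + B * L) 0 K e γ := by
    ext k ω
    simp [hxhat0, stationaryEstimate]
  subst hxhat' hxhat0'
  rw [integral_state_sq hn hA k hC (hxL2 k) (hvL2 k) (hvm k) (hvvar k) (hxv k) (hy k) (hyx k),
    integral_state_sq hn hA k hC (hx0L2 k) (hv0L2 k) (hv0m k) (hv0var k) (hx0v0 k)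
      (fun ω => by rw [hy0]; ring) (hy0x0 k),
    integral_control_sq hn hA k (b := B) (L := L) (c := 1) (fun ω => by rw [hu, one_mul]),
    integral_control_sq hn hA k (b := 0) (L := L) (c := 0) (fun ω => by rw [hu0]; ring),
    Real.coe_toNNReal _ (sq_nonneg σe)]
  have hρ2 : (A + B * L) ^ 2 < 1 := (sq_lt_one_iff_abs_lt_one _).2 hA
  have h1ρ : 0 < 1 - (A + B * L) ^ 2 := sub_pos.2 hρ2
  have hD : 0 < U + B ^ 2 * (W + L ^ 2 * U) / (1 - (A + B * L) ^ 2) := by positivity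
  refine (fun hΔ => ⟨hΔ, by rw [hΔ, mul_div_cancel_left₀ _ hD.ne']⟩) ?_
  field_simp
  ring

/-- (Theorem 2) Under the healthy stationary closed-loop model, the increase in
the stationary LQG cost `J = W·E[x_k²] + U·E[u_k²]` due to a watermarking signal
of variance `σ_e²` satisfies
`ΔLQG = J(σ_e²) − J(0) = (U + B²(W + L²U)/(1 − (A+BL)²)) σ_e²`; equivalently,
`σ_e² = ΔLQG / (U + B²(W + L²U)/(1 − (A+BL)²))`. -/
theorem watermarking_LQG_cost_increase
    {Ω : Type*} [MeasurableSpace Ω] (μ : Measure Ω) [IsProbabilityMeasure μ]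
    (e γ : ℤ → Ω → ℝ) (A B C K L P R σe W U : ℝ)
    (hW : 0 < W) (hU : 0 < U) (hC : C ≠ 0) (hP : 0 < P) (hR : 0 < R)
    (hA : |A + B * L| < 1) (hσe : 0 ≤ σe ^ 2)
    -- `e` is i.i.d. `N(0, σ_e²)`, `γ` is i.i.d. `N(0, C²P + R)` (the
    -- steady-state Kalman innovations), mutually independent
    (helaw : ∀ k, Measure.map (e k) μ = gaussianReal 0 (σe ^ 2).toNNReal)
    (hγlaw : ∀ k, Measure.map (γ k) μ = gaussianReal 0 (C ^ 2 * P + R).toNNReal)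
    (hindep : iIndepFun (Sum.elim e γ) μ)
    -- the stationary filtered estimate with watermarking, and the one without
    -- (i.e. the same series with `σ_e² = 0`, so the `e`-terms vanish)
    (xhat xhat0 : ℤ → Ω → ℝ)
    (hxhat : ∀ (k : ℤ) (ω : Ω), xhat k ω =
      ∑' i : ℕ, (A + B * L) ^ i * (B * e (k - 1 - (i : ℤ)) ω + K * γ (k - (i : ℤ)) ω))
    (hxhat0 : ∀ (k : ℤ) (ω : Ω), xhat0 k ω =
      ∑' i : ℕ, (A + B * L) ^ i * (K * γ (k - (i : ℤ)) ω))
    -- the measurements with and without watermarking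
    (y y0 : ℤ → Ω → ℝ)
    (hy : ∀ (k : ℤ) (ω : Ω), y k ω =
      γ k ω + C * ((A + B * L) * xhat (k - 1) ω + B * e (k - 1) ω))
    (hy0 : ∀ (k : ℤ) (ω : Ω), y0 k ω =
      γ k ω + C * ((A + B * L) * xhat0 (k - 1) ω))
    -- the stationary states: centered, with `y_k = C x_k + v_k`, where `v_k` is
    -- centered measurement noise of variance `R` independent of `x_k`
    (x v x0 v0 : ℤ → Ω → ℝ)
    (hxL2 : ∀ k, MemLp (x k) 2 μ) (hvL2 : ∀ k, MemLp (v k) 2 μ)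
    (hx0L2 : ∀ k, MemLp (x0 k) 2 μ) (hv0L2 : ∀ k, MemLp (v0 k) 2 μ)
    (hxm : ∀ k, ∫ ω, x k ω ∂μ = 0) (hvm : ∀ k, ∫ ω, v k ω ∂μ = 0)
    (hx0m : ∀ k, ∫ ω, x0 k ω ∂μ = 0) (hv0m : ∀ k, ∫ ω, v0 k ω ∂μ = 0)
    (hvvar : ∀ k, ∫ ω, (v k ω) ^ 2 ∂μ = R) (hv0var : ∀ k, ∫ ω, (v0 k ω) ^ 2 ∂μ = R)
    (hxv : ∀ k, IndepFun (x k) (v k) μ) (hx0v0 : ∀ k, IndepFun (x0 k) (v0 k) μ)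
    (hyx : ∀ (k : ℤ) (ω : Ω), y k ω = C * x k ω + v k ω)
    (hy0x0 : ∀ (k : ℤ) (ω : Ω), y0 k ω = C * x0 k ω + v0 k ω)
    -- the controls with and without watermarking
    (u u0 : ℤ → Ω → ℝ)
    (hu : ∀ (k : ℤ) (ω : Ω), u k ω = L * xhat k ω + e k ω)
    (hu0 : ∀ (k : ℤ) (ω : Ω), u0 k ω = L * xhat0 k ω) :
    -- the stationary LQG costs with and without watermarking
    ∀ k : ℤ,
      letI Jw : ℝ := W * ∫ ω, (x k ω) ^ 2 ∂μ + U * ∫ ω, (u k ω) ^ 2 ∂μ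
      letI Jn : ℝ := W * ∫ ω, (x0 k ω) ^ 2 ∂μ + U * ∫ ω, (u0 k ω) ^ 2 ∂μ
      Jw - Jn = (U + B ^ 2 * (W + L ^ 2 * U) / (1 - (A + B * L) ^ 2)) * σe ^ 2 ∧
        σe ^ 2 = (Jw - Jn) / (U + B ^ 2 * (W + L ^ 2 * U) / (1 - (A + B * L) ^ 2)) :=
  watermarking_LQG_cost_increase_general μ e γ A B C K L P R σe W U hW hU hC hA helaw hγlaw hindep
    xhat xhat0 hxhat hxhat0 y y0 hy hy0 x v x0 v0 hxL2 hvL2 hx0L2 hv0L2 hvm hv0m hvvar hv0var hxv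
    hx0v0 hyx hy0x0 u u0 hu hu0
end
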